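/- arXiv:1103.4278 — 3 statements merged into one kernel-verified Lean document; each statement's English description precedes it below -/
import Mathlib

section
/- Let f : R → A be a local homomorphism of commutative local rings with residue field κ = A/𝔪, let Ã = κ ⊗_R A, let M̃ be the kernel of the evaluation map Ã → κ, λ⊗a ↦ λ·a(x), and suppose the κ-linear map ϑ : 𝔪/𝔪² → M̃/M̃² induced by a ↦ 1⊗a is bijective. Then for every element v of the Zariski relative tangent space T^Zar (a κ-linear map v : 𝔪/𝔪² → κ vanishing on the image of 𝔪_R/𝔪_R²), the map D_v : A → κ defined by D_v(a) = v(ϑ⁻¹[1⊗a − a(x)⊗1]) is an R-linear derivation from A to κ. -/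
open IsLocalRing TensorProduct

section RelTangent

variable (R A : Type*) [CommRing R] [CommRing A] [IsLocalRing R] [IsLocalRing A]
  [Algebra R A] [IsLocalHom (algebraMap R A)]

/-- The image in `𝔪_A` of an element of `𝔪_R` under the local homomorphism `R → A`. -/
def mapMax (r : maximalIdeal R) : maximalIdeal A :=
  ⟨algebraMap R A r, by
    rw [IsLocalRing.mem_maximalIdeal, mem_nonunits_iff]
    exact fun h => mem_nonunits_iff.mp ((IsLocalRing.mem_maximalIdeal _).mp r.2)
      (IsLocalHom.map_nonunit _ h)⟩

/-- The class in `𝔪_A/𝔪_A²` of the image of an element of `𝔪_R`; the map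
`j : 𝔪_R/𝔪_R² → 𝔪_A/𝔪_A²` induced by `R → A` sends the class of `r` to `jClass R A r`. -/
noncomputable def jClass (r : maximalIdeal R) : (maximalIdeal A).Cotangent :=
  (maximalIdeal A).toCotangent (mapMax R A r)

/-- The Zariski relative tangent space: the space of `κ`-linear forms on `𝔪_A/𝔪_A²`
vanishing on the image of `j : 𝔪_R/𝔪_R² → 𝔪_A/𝔪_A²`. -/
noncomputable def TZar : Submodule (ResidueField A)
    ((maximalIdeal A).Cotangent →ₗ[ResidueField A] ResidueField A) :=
  ⨅ r : maximalIdeal R, LinearMap.ker (LinearMap.applyₗ (jClass R A r))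

instance : IsScalarTower R A (ResidueField A) :=
  IsScalarTower.of_algebraMap_eq fun x =>
    (IsLocalRing.ResidueField.map_residue (algebraMap R A) x).symm

/-- The evaluation map `Ã = κ ⊗_R A → κ`, `λ ⊗ a ↦ λ·a(x)`. -/
noncomputable def ev : (ResidueField A ⊗[R] A) →ₐ[ResidueField A] ResidueField A :=
  Algebra.TensorProduct.lift (AlgHom.id _ _) (IsScalarTower.toAlgHom R A (ResidueField A))
    fun _ _ => Commute.all _ _

/-- The ideal `M̃ = ker(ev) ⊆ Ã`. -/
noncomputable def Mker : Ideal (ResidueField A ⊗[R] A) := RingHom.ker (ev R A)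

/-- For `m ∈ 𝔪`, the element `1 ⊗ m` of `M̃`. -/
noncomputable def oneTmul (m : maximalIdeal A) : Mker R A :=
  ⟨(1 : ResidueField A) ⊗ₜ[R] (m : A), by
    simp only [Mker, RingHom.mem_ker, ev, Algebra.TensorProduct.lift_tmul, map_one, one_mul,
      AlgHom.coe_id, id_eq, IsScalarTower.coe_toAlgHom', ResidueField.algebraMap_eq]
    exact Ideal.Quotient.eq_zero_iff_mem.mpr m.2⟩

/-- For `a : A`, the element `1 ⊗ a − a(x) ⊗ 1` of `M̃`. -/
noncomputable def gen (a : A) : Mker R A :=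
  ⟨(1 : ResidueField A) ⊗ₜ[R] a - residue A a ⊗ₜ[R] (1 : A), by
    simp [Mker, RingHom.mem_ker, ev, Algebra.TensorProduct.lift_tmul]⟩

end RelTangent

/-! The map `a ↦ [1 ⊗ a − a(x) ⊗ 1]` is already a derivation into `M̃/M̃²`: modulo `M̃²`,
`1 ⊗ ab − ab(x) ⊗ 1 ≡ a(x) (1 ⊗ b − b(x) ⊗ 1) + b(x) (1 ⊗ a − a(x) ⊗ 1)`, the error being the
product `(1 ⊗ a − a(x) ⊗ 1)(1 ⊗ b − b(x) ⊗ 1) ∈ M̃²`. So `D_v` is the composite of this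
derivation with the `κ`-linear form `v ∘ ϑ⁻¹`. -/

section CotangentDerivation

variable {R A : Type*} [CommRing R] [CommRing A] [IsLocalRing R] [IsLocalRing A]
  [Algebra R A] [IsLocalHom (algebraMap R A)]

lemma coe_gen (a : A) : ((gen R A a : Mker R A) : ResidueField A ⊗[R] A)
    = (1 : ResidueField A) ⊗ₜ[R] a - residue A a ⊗ₜ[R] (1 : A) := rfl

lemma gen_add (a b : A) : gen R A (a + b) = gen R A a + gen R A b := by
  ext
  simp only [Submodule.coe_add, coe_gen, map_add, tmul_add, add_tmul]
  abel

lemma gen_smul (r : R) (a : A) :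
    gen R A (r • a) = algebraMap R (ResidueField A) r • gen R A a := by
  ext
  rw [Submodule.coe_smul_of_tower, coe_gen, coe_gen, smul_sub, smul_tmul', smul_tmul',
    smul_eq_mul, smul_eq_mul, mul_one]
  congr 1
  · rw [← smul_tmul, Algebra.algebraMap_eq_smul_one]
  · rw [Algebra.smul_def, map_mul, ← ResidueField.algebraMap_eq, ← IsScalarTower.algebraMap_apply]

lemma coe_gen_mul (a b : A) :
    ((gen R A (a * b) : Mker R A) : ResidueField A ⊗[R] A) =
      residue A a • (gen R A b : ResidueField A ⊗[R] A)
        + residue A b • (gen R A a : ResidueField A ⊗[R] A)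
        + (gen R A a : ResidueField A ⊗[R] A) * (gen R A b : ResidueField A ⊗[R] A) := by
  simp only [coe_gen, map_mul, smul_sub, smul_tmul', smul_eq_mul, mul_one, sub_mul, mul_sub,
    Algebra.TensorProduct.tmul_mul_tmul, one_mul, mul_comm (residue A b) (residue A a)]
  abel

lemma Mker.toCotangent_smul (c : ResidueField A) (x : Mker R A) :
    (Mker R A).toCotangent (c • x) = c • (Mker R A).toCotangent x := by
  rw [algebra_compatible_smul (ResidueField A ⊗[R] A) c x, map_smul, algebraMap_smul]

lemma toCotangent_gen_mul (a b : A) :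
    (Mker R A).toCotangent (gen R A (a * b)) =
      residue A a • (Mker R A).toCotangent (gen R A b)
        + residue A b • (Mker R A).toCotangent (gen R A a) := by
  have hsq : (gen R A a : ResidueField A ⊗[R] A) * gen R A b ∈ Mker R A ^ 2 :=
    pow_two (Mker R A) ▸ Ideal.mul_mem_mul (gen R A a).2 (gen R A b).2
  have hdecomp : gen R A (a * b) = residue A a • gen R A b + residue A b • gen R A a
      + ⟨_, Ideal.pow_le_self two_ne_zero hsq⟩ :=
    Subtype.ext (coe_gen_mul a b)
  rw [hdecomp, map_add, map_add, Mker.toCotangent_smul, Mker.toCotangent_smul,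
    (Ideal.toCotangent_eq_zero _ ⟨_, _⟩).mpr hsq, add_zero]

noncomputable def Mker.cotangentDerivation
    (φ : (Mker R A).Cotangent →ₗ[ResidueField A] ResidueField A) :
    Derivation R A (ResidueField A) :=
  Derivation.mk'
    { toFun := fun a => φ ((Mker R A).toCotangent (gen R A a))
      map_add' := fun a b => by simp only [gen_add, map_add]
      map_smul' := fun r a => by
        rw [gen_smul, Mker.toCotangent_smul, map_smul, RingHom.id_apply, algebraMap_smul] }
    fun a b => by
      simp only [LinearMap.coe_mk, AddHom.coe_mk, toCotangent_gen_mul, map_add, map_smul,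
        smul_eq_mul, Algebra.smul_def, ResidueField.algebraMap_eq]

end CotangentDerivation

theorem stmt_6_general (R A : Type*) [CommRing R] [CommRing A] [IsLocalRing R] [IsLocalRing A]
    [Algebra R A] [IsLocalHom (algebraMap R A)]
    (ϑ : (maximalIdeal A).Cotangent →ₗ[ResidueField A] (Mker R A).Cotangent)
    (hbij : Function.Bijective ϑ)
    (v : TZar R A) :
    ∃ D : Derivation R A (ResidueField A), ∀ a : A,
      D a = (v : (maximalIdeal A).Cotangent →ₗ[ResidueField A] ResidueField A)
        ((LinearEquiv.ofBijective ϑ hbij).symm ((Mker R A).toCotangent (gen R A a))) :=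
  ⟨Mker.cotangentDerivation
      ((v : (maximalIdeal A).Cotangent →ₗ[ResidueField A] ResidueField A) ∘ₗ
        (LinearEquiv.ofBijective ϑ hbij).symm.toLinearMap),
    fun _ => rfl⟩

/-- Let `f : R → A` be a local homomorphism of commutative local rings with
residue field `κ`, `Ã = κ ⊗_R A`, `M̃` the kernel of the evaluation map `Ã → κ`, and suppose
the `κ`-linear map `ϑ : 𝔪/𝔪² → M̃/M̃²` induced by `a ↦ 1 ⊗ a` is bijective.  Then for every
element `v` of the Zariski relative tangent space `T^Zar`, the map `D_v : A → κ` defined by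
`D_v(a) = v(ϑ⁻¹[1⊗a − a(x)⊗1])` is an `R`-linear derivation from `A` to `κ`. -/
theorem stmt_6 (R A : Type*) [CommRing R] [CommRing A] [IsLocalRing R] [IsLocalRing A]
    [Algebra R A] [IsLocalHom (algebraMap R A)]
    (ϑ : (maximalIdeal A).Cotangent →ₗ[ResidueField A] (Mker R A).Cotangent)
    (hϑ : ∀ m : maximalIdeal A,
      ϑ ((maximalIdeal A).toCotangent m) = (Mker R A).toCotangent (oneTmul R A m))
    (hbij : Function.Bijective ϑ)
    (v : TZar R A) :
    ∃ D : Derivation R A (ResidueField A), ∀ a : A,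
      D a = (v : (maximalIdeal A).Cotangent →ₗ[ResidueField A] ResidueField A)
        ((LinearEquiv.ofBijective ϑ hbij).symm ((Mker R A).toCotangent (gen R A a))) :=
  stmt_6_general R A ϑ hbij v
end

section
/- Let k be a field and (A, 𝔪) a local k-algebra whose residue field K = A/𝔪 is an algebraic and separable extension of k. Then the canonical K-linear map Φ : Der_k(A, K) → Hom_K(𝔪/𝔪², K), sending a k-linear derivation D : A → K to the map it induces on 𝔪/𝔪², is bijective; i.e. the Grothendieck tangent space coincides with the Zariski tangent space of A. -/
/-!
A derivation `D : A → K` is the same as an `A`-linear map `Ω[A⁄k] → K`, i.e. a `K`-linear map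
`K ⊗[A] Ω[A⁄k] → K`, and `Φ` is precomposition with the conormal map
`𝔪/𝔪² → K ⊗[A] Ω[A⁄k]`, `x ↦ 1 ⊗ dx`. As `K/k` is separable algebraic, it is formally étale.
Unramifiedness gives `Ω[K⁄k] = 0`, so by exactness of `𝔪/𝔪² → K ⊗[A] Ω[A⁄k] → Ω[K⁄k] → 0`
the conormal map is surjective; smoothness gives a `k`-algebra section of `A/𝔪² → K`, which
yields a retraction of the conormal map. So the conormal map is bijective, hence so is `Φ`.
-/

open IsLocalRing KaehlerDifferential

theorem Algebra.FormallySmooth.exists_kerSquareLift_comp_eq_id {R P S : Type*} [CommRing R]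
    [CommRing P] [CommRing S] [Algebra R P] [Algebra R S] [Algebra.FormallySmooth R S]
    (f : P →ₐ[R] S) (hf : Function.Surjective f) :
    ∃ g : S →ₐ[R] P ⧸ RingHom.ker f.toRingHom ^ 2, f.kerSquareLift.comp g = AlgHom.id R S := by
  have surj : Function.Surjective f.kerSquareLift :=
    Ideal.Quotient.lift_surjective_of_surjective _ _ hf
  have sqz : RingHom.ker f.kerSquareLift.toRingHom ^ 2 = ⊥ := by
    rw [AlgHom.ker_kerSquareLift, Ideal.cotangentIdeal_square]
  let e := Ideal.quotientKerAlgEquivOfSurjective surj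
  obtain ⟨g, hg⟩ := Algebra.FormallySmooth.comp_surjective R S _ sqz e.symm.toAlgHom
  refine ⟨g, AlgHom.ext fun x ↦ ?_⟩
  have hx := congr(e ($hg x))
  simp only [AlgHom.comp_apply, Ideal.Quotient.mkₐ_eq_mk, AlgEquiv.coe_toAlgHom,
    AlgEquiv.apply_symm_apply, e] at hx
  exact hx

section

variable {R P S : Type*} [CommRing R] [CommRing P] [CommRing S] [Algebra R P] [Algebra P S]
  [Algebra R S] [IsScalarTower R P S]

namespace KaehlerDifferential

theorem kerCotangentToTensor_injective [Algebra.FormallySmooth R S]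
    (hf : Function.Surjective (algebraMap P S)) :
    Function.Injective (kerCotangentToTensor R P S) := by
  obtain ⟨g, hg⟩ :=
    Algebra.FormallySmooth.exists_kerSquareLift_comp_eq_id (IsScalarTower.toAlgHom R P S) hf
  obtain ⟨l, hl⟩ := (retractionKerCotangentToTensorEquivSection hf).symm ⟨g, hg⟩
  exact Function.LeftInverse.injective (g := l) (LinearMap.congr_fun hl)

theorem kerCotangentToTensor_surjective [Algebra.FormallyUnramified R S]
    (hf : Function.Surjective (algebraMap P S)) :
    Function.Surjective (kerCotangentToTensor R P S) := fun x ↦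
  (exact_kerCotangentToTensor_mapBaseChange R P S hf x).mp (Subsingleton.elim _ _)

end KaehlerDifferential

namespace Derivation

noncomputable def restrictKerCotangent :
    Derivation R P S →ₗ[S] (RingHom.ker (algebraMap P S)).Cotangent →ₗ[P] S where
  toFun D :=
    (D.liftKaehlerDifferential.liftBaseChange S).restrictScalars P ∘ₗ kerCotangentToTensor R P S
  map_add' D₁ D₂ := LinearMap.ext fun x ↦ by
    obtain ⟨x, rfl⟩ := Ideal.toCotangent_surjective _ x
    simp
  map_smul' s D := LinearMap.ext fun x ↦ by
    obtain ⟨x, rfl⟩ := Ideal.toCotangent_surjective _ x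
    simp

@[simp]
theorem restrictKerCotangent_toCotangent (D : Derivation R P S)
    (x : RingHom.ker (algebraMap P S)) :
    restrictKerCotangent D (Ideal.toCotangent _ x) = D x := by
  simp [restrictKerCotangent]

theorem restrictKerCotangent_injective [Algebra.FormallyUnramified R S]
    (hf : Function.Surjective (algebraMap P S)) :
    Function.Injective (restrictKerCotangent (R := R) (P := P) (S := S)) := by
  intro D₁ D₂ h
  have hl : D₁.liftKaehlerDifferential.liftBaseChange S =
      D₂.liftKaehlerDifferential.liftBaseChange S := by
    refine LinearMap.ext fun y ↦ ?_
    obtain ⟨x, rfl⟩ := kerCotangentToTensor_surjective (R := R) hf y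
    exact LinearMap.congr_fun h x
  ext x
  simpa using LinearMap.congr_fun hl (1 ⊗ₜ D R P x)

theorem restrictKerCotangent_surjective [Algebra.FormallySmooth R S]
    [Algebra.FormallyUnramified R S] (hf : Function.Surjective (algebraMap P S)) :
    Function.Surjective (restrictKerCotangent (R := R) (P := P) (S := S)) := by
  intro φ
  let e := LinearEquiv.ofBijective (kerCotangentToTensor R P S)
    ⟨kerCotangentToTensor_injective hf, kerCotangentToTensor_surjective hf⟩
  refine ⟨(φ ∘ₗ e.symm.toLinearMap).compDer ((TensorProduct.mk P S _ 1).compDer (D R P)), ?_⟩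
  ext x
  obtain ⟨x, rfl⟩ := Ideal.toCotangent_surjective _ x
  have he : e.symm (1 ⊗ₜ D R P x) = Ideal.toCotangent _ x :=
    e.symm_apply_eq.mpr (kerCotangentToTensor_toCotangent R P S x).symm
  simp [he]

end Derivation

end

theorem stmt_12_general (k A : Type*) [Field k] [CommRing A] [IsLocalRing A] [Algebra k A]
    [Algebra.IsSeparable k (ResidueField A)] :
    ∃ Φ : Derivation k A (ResidueField A) →ₗ[ResidueField A]
        ((maximalIdeal A).Cotangent →ₗ[ResidueField A] ResidueField A),
      (∀ (D : Derivation k A (ResidueField A)) (m : maximalIdeal A),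
        Φ D ((maximalIdeal A).toCotangent m) = D m) ∧
      Function.Bijective Φ := by
  have hf : Function.Surjective (algebraMap A (ResidueField A)) := residue_surjective
  have := Algebra.FormallyEtale.of_isSeparable k (ResidueField A)
  let e : (maximalIdeal A).Cotangent ≃ₗ[A]
      (RingHom.ker (algebraMap A (ResidueField A))).Cotangent :=
    Ideal.Cotangent.equivOfEq _ _ ker_residue.symm
  let E : ((RingHom.ker (algebraMap A (ResidueField A))).Cotangent →ₗ[A] ResidueField A) ≃ₗ[A]
      ((maximalIdeal A).Cotangent →ₗ[ResidueField A] ResidueField A) :=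
    e.symm.arrowCongr (.refl A _) ≪≫ₗ LinearMap.extendScalarsOfSurjectiveEquiv hf
  refine ⟨(E.toLinearMap ∘ₗ
      Derivation.restrictKerCotangent.restrictScalars A).extendScalarsOfSurjective hf,
    fun D m ↦ ?_, E.bijective.comp ⟨Derivation.restrictKerCotangent_injective hf,
      Derivation.restrictKerCotangent_surjective hf⟩⟩
  change Derivation.restrictKerCotangent D (e (Ideal.toCotangent _ m)) = D m
  exact D.restrictKerCotangent_toCotangent ⟨m, (ker_residue (R := A)).symm ▸ m.2⟩

/-- Let `k` be a field and `(A, 𝔪)` a local `k`-algebra whose residue field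
`K = A/𝔪` is an algebraic and separable extension of `k`.  Then the canonical `K`-linear map
`Φ : Der_k(A, K) → Hom_K(𝔪/𝔪², K)`, sending a `k`-linear derivation `D : A → K` to the map it
induces on `𝔪/𝔪²`, is bijective; i.e. the Grothendieck tangent space coincides with the
Zariski tangent space of `A`. -/
theorem stmt_12 (k A : Type*) [Field k] [CommRing A] [IsLocalRing A] [Algebra k A]
    [Algebra.IsAlgebraic k (ResidueField A)] [Algebra.IsSeparable k (ResidueField A)] :
    ∃ Φ : Derivation k A (ResidueField A) →ₗ[ResidueField A]
        ((maximalIdeal A).Cotangent →ₗ[ResidueField A] ResidueField A),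
      (∀ (D : Derivation k A (ResidueField A)) (m : maximalIdeal A),
        Φ D ((maximalIdeal A).toCotangent m) = D m) ∧
      Function.Bijective Φ :=
  stmt_12_general k A
end

section
/- Let f : X → S be a morphism of schemes, x a point of X lying over s = f(x), and suppose the residue field extension κ(x)/κ(s) is algebraic and separable. Then the canonical κ(x)-linear map from the Grothendieck relative tangent space Der_{O_{S,s}}(O_{X,x}, κ(x)) to the Zariski relative tangent space T^Zar_{X/S}(x) — sending a derivation D to the map it induces on 𝔪_x/𝔪_x² — is bijective. -/
/-
A derivation `D : O_{X,x} → κ(x)` over `O_{S,s}` is a linear form on `κ(x) ⊗ Ω_{O_{X,x}/O_{S,s}}`,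
and the conormal map `𝔪_x/𝔪_x² → κ(x) ⊗ Ω_{O_{X,x}/O_{S,s}}` is onto because its cokernel
`Ω_{κ(x)/O_{S,s}} = Ω_{κ(x)/κ(s)}` vanishes for a separable algebraic extension; so `D` is
determined by its restriction to `𝔪_x`.
Conversely, a Zariski tangent vector `φ` kills `J = 𝔪_x² + 𝔪_s O_{X,x}`, and `B = O_{X,x}/J` is a
`κ(s)`-algebra that is a square-zero thickening of `κ(x)`. Formal smoothness of `κ(x)/κ(s)` gives
a `κ(s)`-algebra section `σ : κ(x) → B`, and `a ↦ φ(a - σ(a(x)))` is a derivation inducing `φ`.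
-/

open IsLocalRing AlgebraicGeometry

section TangentForm

variable {R A : Type*} [CommRing R] [CommRing A] [IsLocalRing A] [Algebra R A]

lemma smul_eq_zero_of_mem_maximalIdeal {M : Type*} [AddCommGroup M] [Module (ResidueField A) M]
    [Module A M] [IsScalarTower A (ResidueField A) M] {m : A} (hm : m ∈ maximalIdeal A) (z : M) :
    m • z = 0 := by
  rw [← algebraMap_smul (ResidueField A), show algebraMap A (ResidueField A) m = 0 from
    (residue_eq_zero_iff m).mpr hm, zero_smul]

noncomputable def Derivation.restrictMaximalIdeal (D : Derivation R A (ResidueField A)) :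
    maximalIdeal A →ₗ[A] ResidueField A where
  toFun m := D m
  map_add' m n := D.map_add m n
  map_smul' a m := by
    simp [D.leibniz, smul_eq_zero_of_mem_maximalIdeal m.2]

noncomputable def Derivation.cotangentForm (D : Derivation R A (ResidueField A)) :
    (maximalIdeal A).Cotangent →ₗ[ResidueField A] ResidueField A :=
  (Ideal.Cotangent.lift D.restrictMaximalIdeal fun m n => by
    simp [Derivation.restrictMaximalIdeal, D.leibniz, smul_eq_zero_of_mem_maximalIdeal m.2,
      smul_eq_zero_of_mem_maximalIdeal n.2]).extendScalarsOfSurjective Ideal.Quotient.mk_surjective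

open KaehlerDifferential TensorProduct in
lemma Derivation.eq_zero_of_forall_mem_maximalIdeal
    [Algebra.FormallyUnramified R (ResidueField A)] (D : Derivation R A (ResidueField A))
    (hD : ∀ m ∈ maximalIdeal A, D m = 0) : D = 0 := by
  let ℓ := D.liftKaehlerDifferential.liftBaseChange (ResidueField A)
  have hℓ (a : A) : ℓ (1 ⊗ₜ KaehlerDifferential.D R A a) = D a := by
    simp [ℓ]
  ext a
  obtain ⟨c, hc⟩ := (exact_kerCotangentToTensor_mapBaseChange R A (ResidueField A)
    Ideal.Quotient.mk_surjective (1 ⊗ₜ KaehlerDifferential.D R A a)).mp (Subsingleton.elim _ _)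
  obtain ⟨x, rfl⟩ := Ideal.toCotangent_surjective _ c
  rw [Derivation.zero_apply, ← hℓ, ← hc, kerCotangentToTensor_toCotangent, hℓ]
  exact hD _ ((residue_eq_zero_iff _).mp x.2)

end TangentForm

section DerivationToTZar

variable (R A : Type*) [CommRing R] [CommRing A] [IsLocalRing R] [IsLocalRing A]
  [Algebra R A] [IsLocalHom (algebraMap R A)]

noncomputable def derivationToTZar :
    Derivation R A (ResidueField A) →ₗ[ResidueField A] TZar R A where
  toFun D := ⟨D.cotangentForm, Submodule.mem_iInf _ |>.mpr fun r => D.map_algebraMap r⟩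
  map_add' D E := by
    ext c
    obtain ⟨m, rfl⟩ := (maximalIdeal A).toCotangent_surjective c
    rfl
  map_smul' c D := by
    ext c
    obtain ⟨m, rfl⟩ := (maximalIdeal A).toCotangent_surjective c
    rfl

lemma derivationToTZar_apply_toCotangent (D : Derivation R A (ResidueField A))
    (m : maximalIdeal A) :
    (derivationToTZar R A D : (maximalIdeal A).Cotangent →ₗ[ResidueField A] ResidueField A)
      ((maximalIdeal A).toCotangent m) = D m := rfl

lemma derivationToTZar_injective [Algebra.FormallyUnramified (ResidueField R) (ResidueField A)] :
    Function.Injective (derivationToTZar R A) := by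
  have : Algebra.FormallyUnramified R (ResidueField R) :=
    .of_surjective (Algebra.ofId R _) Ideal.Quotient.mk_surjective
  have : Algebra.FormallyUnramified R (ResidueField A) := .comp R (ResidueField R) _
  refine (injective_iff_map_eq_zero _).mpr fun D hD => D.eq_zero_of_forall_mem_maximalIdeal
    fun m hm => ?_
  rw [← derivationToTZar_apply_toCotangent R A D ⟨m, hm⟩, hD]
  rfl

end DerivationToTZar

section FiberThickening

variable (R A : Type*) [CommRing R] [CommRing A] [IsLocalRing R] [IsLocalRing A] [Algebra R A]

/-- `𝔪_A² + 𝔪_R A`: the quotient by it is the first-order neighbourhood of the closed point in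
the closed fibre. -/
def fiberIdeal : Ideal A := maximalIdeal A ^ 2 ⊔ (maximalIdeal R).map (algebraMap R A)

noncomputable instance : Algebra (ResidueField R) (A ⧸ fiberIdeal R A) :=
  Ideal.Quotient.algebraQuotientOfLEComap (Ideal.map_le_iff_le_comap.mp le_sup_right)

instance : IsScalarTower R (ResidueField R) (A ⧸ fiberIdeal R A) :=
  .of_algebraMap_eq fun _ => rfl

variable [IsLocalHom (algebraMap R A)]

lemma fiberIdeal_le_maximalIdeal : fiberIdeal R A ≤ maximalIdeal A :=
  sup_le (Ideal.pow_le_self two_ne_zero) (map_maximalIdeal_le _)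

noncomputable def fiberResidue : A ⧸ fiberIdeal R A →ₐ[ResidueField R] ResidueField A where
  toRingHom := Ideal.Quotient.factor (fiberIdeal_le_maximalIdeal R A)
  commutes' := by rintro ⟨r⟩; rfl

lemma fiberResidue_surjective : Function.Surjective (fiberResidue R A) :=
  Ideal.Quotient.factor_surjective (fiberIdeal_le_maximalIdeal R A)

lemma ker_fiberResidue :
    RingHom.ker (fiberResidue R A) = (maximalIdeal A).map (Ideal.Quotient.mk (fiberIdeal R A)) :=
  Ideal.Quotient.factor_ker (fiberIdeal_le_maximalIdeal R A)

lemma ker_fiberResidue_sq : RingHom.ker (fiberResidue R A) ^ 2 = ⊥ := by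
  rw [ker_fiberResidue, ← Ideal.map_pow, Ideal.map_eq_bot_iff_le_ker, Ideal.mk_ker]
  exact le_sup_left

noncomputable def maximalIdealToKerFiberResidue :
    maximalIdeal A →ₗ[A] RingHom.ker (fiberResidue R A) where
  toFun m := ⟨Ideal.Quotient.mk _ m, by
    rw [ker_fiberResidue]; exact Ideal.mem_map_of_mem _ m.2⟩
  map_add' m n := by ext; simp
  map_smul' a m := by ext; simp [Algebra.smul_def]

lemma maximalIdealToKerFiberResidue_surjective :
    Function.Surjective (maximalIdealToKerFiberResidue R A) := by
  rintro ⟨b, hb⟩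
  rw [ker_fiberResidue] at hb
  obtain ⟨m, hm, rfl⟩ :=
    Ideal.mem_image_of_mem_map_of_surjective _ Ideal.Quotient.mk_surjective hb
  exact ⟨⟨m, hm⟩, rfl⟩

variable [Algebra.FormallySmooth (ResidueField R) (ResidueField A)]

noncomputable def fiberSection : ResidueField A →ₐ[ResidueField R] A ⧸ fiberIdeal R A :=
  Algebra.FormallySmooth.liftOfSurjective (AlgHom.id _ _) (fiberResidue R A)
    (fiberResidue_surjective R A) ⟨2, ker_fiberResidue_sq R A⟩

lemma fiberResidue_fiberSection (x : ResidueField A) :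
    fiberResidue R A (fiberSection R A x) = x :=
  Algebra.FormallySmooth.liftOfSurjective_apply _ _ _ _ x

noncomputable def fiberSectionLift : A →ₐ[R] A ⧸ fiberIdeal R A :=
  ((fiberSection R A).restrictScalars R).comp (IsScalarTower.toAlgHom R A (ResidueField A))

noncomputable def fiberDerivation : Derivation R A (RingHom.ker (fiberResidue R A)) :=
  derivationToSquareZeroOfLift _ (ker_fiberResidue_sq R A) (fiberSectionLift R A) (by
    ext x
    refine Ideal.Quotient.eq.mpr (RingHom.mem_ker.mpr ?_)
    rw [map_sub]
    change fiberResidue R A (fiberSection R A (residue A x)) - residue A x = 0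
    rw [fiberResidue_fiberSection, sub_self])

lemma fiberDerivation_apply_of_mem {m : A} (hm : m ∈ maximalIdeal A) :
    fiberDerivation R A m = -maximalIdealToKerFiberResidue R A ⟨m, hm⟩ := by
  ext
  rw [fiberDerivation, derivationToSquareZeroOfLift_apply]
  change fiberSection R A (residue A m) - _ = _
  rw [(residue_eq_zero_iff m).mpr hm, map_zero, zero_sub]
  rfl

end FiberThickening

section DerivationOfMemTZar

variable {R A : Type*} [CommRing R] [CommRing A] [IsLocalRing R] [IsLocalRing A]
  [Algebra R A] [IsLocalHom (algebraMap R A)]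
  {φ : (maximalIdeal A).Cotangent →ₗ[ResidueField A] ResidueField A}

lemma apply_toCotangent_eq_zero_of_mem_TZar (hφ : φ ∈ TZar R A) {m : maximalIdeal A}
    (hm : (m : A) ∈ fiberIdeal R A) : φ ((maximalIdeal A).toCotangent m) = 0 := by
  let F := φ.restrictScalars A ∘ₗ (maximalIdeal A).toCotangent
  have hK : fiberIdeal R A ≤ (LinearMap.ker F).map (maximalIdeal A).subtype := by
    refine sup_le (fun a ha => ?_) (Ideal.map_le_iff_le_comap.mpr fun r hr => ?_)
    · refine ⟨⟨a, Ideal.pow_le_self two_ne_zero ha⟩, ?_, rfl⟩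
      simp [F, (Ideal.toCotangent_eq_zero _ ⟨a, _⟩).mpr ha]
    · exact ⟨mapMax R A ⟨r, hr⟩, (Submodule.mem_iInf _).mp hφ ⟨r, hr⟩, rfl⟩
  obtain ⟨m', hm', he⟩ := hK hm
  rwa [Subtype.ext he] at hm'

variable (φ) in
noncomputable def formOnKerFiberResidue (hφ : φ ∈ TZar R A) :
    RingHom.ker (fiberResidue R A) →ₗ[A] ResidueField A :=
  ((LinearMap.ker (maximalIdealToKerFiberResidue R A)).liftQ
      (φ.restrictScalars A ∘ₗ (maximalIdeal A).toCotangent) fun m hm =>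
        apply_toCotangent_eq_zero_of_mem_TZar hφ (by
          simpa [maximalIdealToKerFiberResidue, Subtype.ext_iff, Ideal.Quotient.eq_zero_iff_mem]
            using hm)) ∘ₗ
    ((maximalIdealToKerFiberResidue R A).quotKerEquivOfSurjective
      (maximalIdealToKerFiberResidue_surjective R A)).symm.toLinearMap

lemma formOnKerFiberResidue_apply (hφ : φ ∈ TZar R A) (m : maximalIdeal A) :
    formOnKerFiberResidue φ hφ (maximalIdealToKerFiberResidue R A m) =
      φ ((maximalIdeal A).toCotangent m) := by
  simp only [formOnKerFiberResidue, LinearMap.comp_apply, LinearEquiv.coe_coe,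
    LinearMap.quotKerEquivOfSurjective_symm_apply]
  rfl

variable [Algebra.FormallySmooth (ResidueField R) (ResidueField A)]

variable (φ) in
noncomputable def derivationOfMemTZar (hφ : φ ∈ TZar R A) : Derivation R A (ResidueField A) :=
  -(formOnKerFiberResidue φ hφ).compDer (fiberDerivation R A)

lemma derivationOfMemTZar_apply (hφ : φ ∈ TZar R A) (m : maximalIdeal A) :
    derivationOfMemTZar φ hφ m = φ ((maximalIdeal A).toCotangent m) := by
  simp [derivationOfMemTZar, fiberDerivation_apply_of_mem R A m.2, formOnKerFiberResidue_apply]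

variable (R A) in
lemma derivationToTZar_surjective :
    Function.Surjective (derivationToTZar R A) := by
  rintro ⟨φ, hφ⟩
  refine ⟨derivationOfMemTZar φ hφ, Subtype.ext (LinearMap.ext fun c => ?_)⟩
  obtain ⟨m, rfl⟩ := (maximalIdeal A).toCotangent_surjective c
  exact derivationOfMemTZar_apply hφ m

end DerivationOfMemTZar

theorem stmt_15_general {X S : Scheme} (f : X ⟶ S) (x : X)
    [Algebra ↑(S.presheaf.stalk (f.base x)) ↑(X.presheaf.stalk x)]
    [IsLocalHom (algebraMap ↑(S.presheaf.stalk (f.base x)) ↑(X.presheaf.stalk x))]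
    [Algebra.IsSeparable (ResidueField ↑(S.presheaf.stalk (f.base x)))
      (ResidueField ↑(X.presheaf.stalk x))] :
    ∃ Φ : Derivation ↑(S.presheaf.stalk (f.base x)) ↑(X.presheaf.stalk x)
          (ResidueField ↑(X.presheaf.stalk x)) →ₗ[ResidueField ↑(X.presheaf.stalk x)]
        TZar ↑(S.presheaf.stalk (f.base x)) ↑(X.presheaf.stalk x),
      (∀ (D : Derivation ↑(S.presheaf.stalk (f.base x)) ↑(X.presheaf.stalk x)
          (ResidueField ↑(X.presheaf.stalk x)))
         (m : maximalIdeal ↑(X.presheaf.stalk x)),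
        ((Φ D : (maximalIdeal ↑(X.presheaf.stalk x)).Cotangent
            →ₗ[ResidueField ↑(X.presheaf.stalk x)] ResidueField ↑(X.presheaf.stalk x)))
          ((maximalIdeal ↑(X.presheaf.stalk x)).toCotangent m) = D m) ∧
      Function.Bijective Φ := by
  have := Algebra.FormallyEtale.of_isSeparable (ResidueField (S.presheaf.stalk (f.base x)))
    (ResidueField (X.presheaf.stalk x))
  exact ⟨derivationToTZar _ _, derivationToTZar_apply_toCotangent _ _,
    derivationToTZar_injective _ _, derivationToTZar_surjective _ _⟩

set_option synthInstance.maxHeartbeats 1000000 in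
set_option maxHeartbeats 1000000 in
/-- Let `f : X → S` be a morphism of schemes, `x` a point of `X` lying over
`s = f(x)`, and suppose the residue field extension `κ(x)/κ(s)` (induced by the stalk map
`f^♯ : O_{S,s} → O_{X,x}`, a local homomorphism) is algebraic and separable.  Then the
canonical `κ(x)`-linear map from the Grothendieck relative tangent space
`Der_{O_{S,s}}(O_{X,x}, κ(x))` to the Zariski relative tangent space `T^Zar_{X/S}(x)` —
sending a derivation `D` to the map it induces on `𝔪_x/𝔪_x²` — is bijective.  (The
`O_{S,s}`-algebra structure on `O_{X,x}` is required to be the one given by the stalk map.) -/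
theorem stmt_15 {X S : Scheme} (f : X ⟶ S) (x : X)
    [Algebra ↑(S.presheaf.stalk (f.base x)) ↑(X.presheaf.stalk x)]
    (halg : algebraMap ↑(S.presheaf.stalk (f.base x)) ↑(X.presheaf.stalk x) = (f.stalkMap x).hom)
    [IsLocalHom (algebraMap ↑(S.presheaf.stalk (f.base x)) ↑(X.presheaf.stalk x))]
    [Algebra.IsAlgebraic (ResidueField ↑(S.presheaf.stalk (f.base x)))
      (ResidueField ↑(X.presheaf.stalk x))]
    [Algebra.IsSeparable (ResidueField ↑(S.presheaf.stalk (f.base x)))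
      (ResidueField ↑(X.presheaf.stalk x))] :
    ∃ Φ : Derivation ↑(S.presheaf.stalk (f.base x)) ↑(X.presheaf.stalk x)
          (ResidueField ↑(X.presheaf.stalk x)) →ₗ[ResidueField ↑(X.presheaf.stalk x)]
        TZar ↑(S.presheaf.stalk (f.base x)) ↑(X.presheaf.stalk x),
      (∀ (D : Derivation ↑(S.presheaf.stalk (f.base x)) ↑(X.presheaf.stalk x)
          (ResidueField ↑(X.presheaf.stalk x)))
         (m : maximalIdeal ↑(X.presheaf.stalk x)),
        ((Φ D : (maximalIdeal ↑(X.presheaf.stalk x)).Cotangent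
            →ₗ[ResidueField ↑(X.presheaf.stalk x)] ResidueField ↑(X.presheaf.stalk x)))
          ((maximalIdeal ↑(X.presheaf.stalk x)).toCotangent m) = D m) ∧
      Function.Bijective Φ :=
  stmt_15_general f x
end
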